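/- arXiv:1407.0982 — 2 statements merged into one kernel-verified Lean document; each statement's English description precedes it below -/
import Mathlib

section
/- Let a Markov chain on $M$ with invariant measure $\lambda^\varepsilon$ satisfy the uniform exponential mixing bound $|\int g\, p_\varepsilon^k(x,dy) - \int g\, d\lambda^\varepsilon| \leq c_1 e^{-\Lambda k}$ for a bounded function $g$ with $\int_M g\, d\lambda^\varepsilon = 0$, and let a second chain with kernel $\tilde p_\varepsilon$ and invariant measure $\tilde\lambda^\varepsilon$ satisfy the same bound, together with the comparison $|\int g\, \tilde p_\varepsilon^k(x,dy) - \int g\, p_\varepsilon^k(x,dy)| \leq c_2 \sqrt{\varepsilon}\, k$ for all $x$ and $k$. Then for every $\alpha \in (0, 1/2)$ there is a constant $C$ such that $|\int g\, d\tilde\lambda^\varepsilon| \leq C \varepsilon^{1/2 - \alpha}$ for all $\varepsilon \in (0, \varepsilon_0]$. -/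
open MeasureTheory ProbabilityTheory ENNReal NNReal

/-- The `k`-step transition kernel of a Markov chain with one-step kernel `κ`. -/
noncomputable def kernelIter {M : Type} [MeasurableSpace M] (κ : Kernel M M) : ℕ → Kernel M M :=
  fun k => (fun ξ => κ.comp ξ)^[k] Kernel.id

private lemma pow_div_factorial_le_exp_aux (x : ℝ) (hx : 0 ≤ x) (n : ℕ) :
    x ^ n / n.factorial ≤ Real.exp x :=
  le_trans
    (Finset.single_le_sum (f := fun i => x ^ i / i.factorial)
      (fun i _ => by positivity) (Finset.self_mem_range_succ n))
    (Real.sum_le_exp_of_nonneg hx (n + 1))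

private lemma rpow_le_const_mul_exp (Λ β : ℝ) (hΛ : 0 < Λ) (hβ : 0 ≤ β) :
    ∃ D : ℝ, 0 < D ∧ ∀ t : ℝ, 0 ≤ t → t ^ β ≤ D * Real.exp (Λ * t) := by
  set n := ⌈β⌉₊ with hn
  refine ⟨1 + n.factorial / Λ ^ n, by positivity, fun t ht => ?_⟩
  have hexp1 : (1 : ℝ) ≤ Real.exp (Λ * t) := Real.one_le_exp (by positivity)
  rcases le_or_gt t 1 with h1 | h1
  · have h2 : t ^ β ≤ 1 := Real.rpow_le_one ht h1 hβ
    have hfac : (0:ℝ) < (n.factorial : ℝ) / Λ ^ n :=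
      div_pos (by exact_mod_cast n.factorial_pos) (pow_pos hΛ n)
    nlinarith [Real.exp_pos (Λ * t)]
  · have h2 : t ^ β ≤ t ^ (n : ℝ) :=
      Real.rpow_le_rpow_of_exponent_le h1.le (Nat.le_ceil β)
    rw [Real.rpow_natCast] at h2
    have h3 : (Λ * t) ^ n / n.factorial ≤ Real.exp (Λ * t) :=
      pow_div_factorial_le_exp_aux _ (by positivity) n
    have h4 : t ^ n ≤ n.factorial / Λ ^ n * Real.exp (Λ * t) := by
      rw [mul_pow] at h3
      rw [div_mul_eq_mul_div, le_div_iff₀ (by positivity)]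
      rw [div_le_iff₀ (by positivity : (0:ℝ) < (n.factorial : ℝ))] at h3
      nlinarith
    have h5 : n.factorial / Λ ^ n * Real.exp (Λ * t)
        ≤ (1 + n.factorial / Λ ^ n) * Real.exp (Λ * t) := by
      nlinarith [Real.exp_pos (Λ * t)]
    linarith

/-- If two families of Markov chains are uniformly exponentially mixing (to invariant
measures `lam ε`, `tlam ε` respectively), `∫ g dlam^ε = 0`, and their `k`-step integrals
of `g` differ by at most `c₂ √ε k`, then `|∫ g dtlam^ε| ≤ C ε^{1/2-α}` for every
`α ∈ (0, 1/2)`. -/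
theorem invariant_mean_bound_from_mixing_and_comparison
    {M : Type} [MeasurableSpace M] [Nonempty M]
    (p tp : ℝ → Kernel M M) (hp : ∀ ε, IsMarkovKernel (p ε)) (htp : ∀ ε, IsMarkovKernel (tp ε))
    (lam tlam : ℝ → Measure M)
    (hlamP : ∀ ε, IsProbabilityMeasure (lam ε)) (htlamP : ∀ ε, IsProbabilityMeasure (tlam ε))
    (ε₀ : ℝ) (hε₀ : 0 < ε₀)
    (g : M → ℝ) (hgm : Measurable g) (Cg : ℝ) (hCg : ∀ y, |g y| ≤ Cg)
    (c₁ c₂ Λ : ℝ) (hc₁ : 0 < c₁) (hc₂ : 0 < c₂) (hΛ : 0 < Λ)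
    (hmean : ∀ ε ∈ Set.Ioc 0 ε₀, (∫ y, g y ∂(lam ε)) = 0)
    (hmix : ∀ ε ∈ Set.Ioc 0 ε₀, ∀ x : M, ∀ k : ℕ,
      |(∫ y, g y ∂(kernelIter (p ε) k x)) - ∫ y, g y ∂(lam ε)| ≤ c₁ * Real.exp (-Λ * k))
    (htmix : ∀ ε ∈ Set.Ioc 0 ε₀, ∀ x : M, ∀ k : ℕ,
      |(∫ y, g y ∂(kernelIter (tp ε) k x)) - ∫ y, g y ∂(tlam ε)| ≤ c₁ * Real.exp (-Λ * k))
    (hcomp : ∀ ε ∈ Set.Ioc 0 ε₀, ∀ x : M, ∀ k : ℕ,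
      |(∫ y, g y ∂(kernelIter (tp ε) k x)) - ∫ y, g y ∂(kernelIter (p ε) k x)|
        ≤ c₂ * Real.sqrt ε * k) :
    ∀ α ∈ Set.Ioo (0 : ℝ) (1 / 2), ∃ C : ℝ, ∀ ε ∈ Set.Ioc 0 ε₀,
      |∫ y, g y ∂(tlam ε)| ≤ C * ε ^ ((1 : ℝ) / 2 - α) := by
  intro α hα
  obtain ⟨hα0, hα2⟩ := hα
  set β : ℝ := (1 / 2 - α) / α with hβdef
  have hβ : 0 ≤ β := by
    apply div_nonneg <;> linarith
  obtain ⟨D, hD, hDle⟩ := rpow_le_const_mul_exp Λ β hΛ hβ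
  refine ⟨2 * c₁ * D + c₂ * (1 + ε₀ ^ α), fun ε hε => ?_⟩
  obtain ⟨hε0, hεε₀⟩ := hε
  set x : M := Classical.arbitrary M
  set t : ℝ := ε ^ (-α) with htdef
  have ht0 : 0 < t := Real.rpow_pos_of_pos hε0 _
  set k : ℕ := ⌈t⌉₊ with hkdef
  have hk1 : t ≤ (k : ℝ) := Nat.le_ceil _
  have hk2 : (k : ℝ) ≤ t + 1 := (Nat.ceil_lt_add_one ht0.le).le
  set s : ℝ := ε ^ ((1 : ℝ) / 2 - α) with hsdef
  have hs0 : 0 < s := Real.rpow_pos_of_pos hε0 _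
  -- triangle inequality
  set Itl : ℝ := ∫ y, g y ∂(tlam ε)
  set Itp : ℝ := ∫ y, g y ∂(kernelIter (tp ε) k x)
  set Ip : ℝ := ∫ y, g y ∂(kernelIter (p ε) k x)
  have e1 : |Itp - Itl| ≤ c₁ * Real.exp (-Λ * k) := htmix ε ⟨hε0, hεε₀⟩ x k
  have e2 : |Itp - Ip| ≤ c₂ * Real.sqrt ε * k := hcomp ε ⟨hε0, hεε₀⟩ x k
  have e3 : |Ip| ≤ c₁ * Real.exp (-Λ * k) := by
    have := hmix ε ⟨hε0, hεε₀⟩ x k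
    rwa [hmean ε ⟨hε0, hεε₀⟩, sub_zero] at this
  have htri : |Itl| ≤ |Itp - Itl| + |Itp - Ip| + |Ip| := by
    calc |Itl| = |-(Itp - Itl) + (Itp - Ip) + Ip| := by ring_nf
      _ ≤ |-(Itp - Itl) + (Itp - Ip)| + |Ip| := abs_add_le _ _
      _ ≤ |-(Itp - Itl)| + |Itp - Ip| + |Ip| := by gcongr; exact abs_add_le _ _
      _ = |Itp - Itl| + |Itp - Ip| + |Ip| := by rw [abs_neg]
  -- bound the exponential term
  have hexp : Real.exp (-Λ * k) ≤ D * s := by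
    have h1 : Real.exp (-Λ * k) ≤ Real.exp (-(Λ * t)) := by
      apply Real.exp_le_exp.mpr
      have := mul_le_mul_of_nonneg_left hk1 hΛ.le
      linarith
    have h2 : t ^ β ≤ D * Real.exp (Λ * t) := hDle t ht0.le
    have hb : (0:ℝ) < t ^ β := Real.rpow_pos_of_pos ht0 β
    have h3 : Real.exp (-(Λ * t)) ≤ D * (t ^ β)⁻¹ := by
      rw [Real.exp_neg, inv_eq_one_div, ← div_eq_mul_inv,
        div_le_div_iff₀ (Real.exp_pos _) hb]
      nlinarith
    have h4 : (t ^ β)⁻¹ = s := by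
      rw [htdef, ← Real.rpow_mul hε0.le, ← Real.rpow_neg hε0.le, hsdef]
      congr 1
      rw [hβdef]
      field_simp
    rw [h4] at h3
    linarith
  -- bound the sqrt term
  have hsqrt : Real.sqrt ε * k ≤ s * (1 + ε₀ ^ α) := by
    have hsq : Real.sqrt ε = ε ^ ((1 : ℝ) / 2) := Real.sqrt_eq_rpow ε
    have h1 : ε ^ ((1 : ℝ) / 2) * t = s := by
      rw [htdef, hsdef, ← Real.rpow_add hε0]
      congr 1 <;> ring
    have h2 : ε ^ ((1 : ℝ) / 2) = s * ε ^ α := by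
      rw [hsdef, ← Real.rpow_add hε0]
      congr 1 <;> ring
    have h3 : ε ^ α ≤ ε₀ ^ α := Real.rpow_le_rpow hε0.le hεε₀ hα0.le
    have h4 : Real.sqrt ε * k ≤ ε ^ ((1 : ℝ) / 2) * (t + 1) := by
      rw [hsq]
      exact mul_le_mul_of_nonneg_left hk2 (Real.rpow_pos_of_pos hε0 _).le
    calc Real.sqrt ε * k ≤ ε ^ ((1 : ℝ) / 2) * (t + 1) := h4
      _ = s + s * ε ^ α := by rw [mul_add, mul_one, h1, h2]
      _ ≤ s + s * ε₀ ^ α := by nlinarith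
      _ = s * (1 + ε₀ ^ α) := by ring
  have b1 : c₁ * Real.exp (-Λ * k) ≤ c₁ * (D * s) :=
    mul_le_mul_of_nonneg_left hexp hc₁.le
  have b2 : c₂ * Real.sqrt ε * k ≤ c₂ * (s * (1 + ε₀ ^ α)) := by
    rw [mul_assoc]; exact mul_le_mul_of_nonneg_left hsqrt hc₂.le
  have hfin : (2 * c₁ * D + c₂ * (1 + ε₀ ^ α)) * s
      = c₁ * (D * s) + c₂ * (s * (1 + ε₀ ^ α)) + c₁ * (D * s) := by ring
  linarith
end

section
/- Let $J: X \to [0, \infty)$ be bounded measurable with $\bar J := \sup_X J$, and let $(\tilde Z_k)_{k \geq 0}$ be any sequence of $X$-valued random variables. Define, for $\varepsilon > 0$, $\nu_\varepsilon(\sigma = k) = \mathbf{E}\big[e^{-\sqrt{\varepsilon}(J(\tilde Z_0) + \cdots + J(\tilde Z_{k-1}))}(1 - e^{-\sqrt{\varepsilon} J(\tilde Z_k)})\big]$. Then for every $k_0 \geq 1$, every $\eta > 0$, and every $a > 0$: if $\mathbf{P}\big(\big|\frac{1}{k}\sum_{j=0}^{k-1} J(\tilde Z_j) - J_\varepsilon\big|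 \geq \eta\big) \leq \eta$ for all $k \geq k_0$ (where $J_\varepsilon > 0$), then $\sum_{k = k_0}^{[a/\sqrt{\varepsilon}]} \nu_\varepsilon(\sigma = k) \leq \eta + (1 - e^{-\sqrt{\varepsilon}\, \bar J}) \sum_{k=k_0}^{[a/\sqrt{\varepsilon}]} e^{-\sqrt{\varepsilon}\, k (J_\varepsilon - \eta)}$. -/
/-!
Let `F k = exp (-√ε (J(Z₀) + ⋯ + J(Z_{k-1})))`, so that `ν_ε(σ = k) = 𝔼[F k - F (k+1)]`, and
compare `F` with the deterministic profile `e k = exp (-√ε k (J_ε - η))` by splitting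
`F k = (F k - e k)⁺ + min (F k) (e k)`. One step of killing lowers `min (F k) (e k)` by at most
`(1 - e^{-√ε J̄}) e k`, apart from the drop `e k - e (k+1)` of the profile itself, which only
matters when `F (k+1) > e (k+1)`; the excess `(F k - e k)⁺` telescopes. The excess at time `k₀`
and the profile drops are charged to the events `F k > e k`, on which the empirical mean of `J`
lies `η` below `J_ε`. Each of these has probability at most `η`, and the charges have total
weight `1 - e (k_max + 1) ≤ 1`.
-/

open MeasureTheory Finset

theorem Finset.sum_Icc_sub_succ {M : Type*} [AddCommGroup M] {m n : ℕ} (hmn : m ≤ n)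
    (u : ℕ → M) : ∑ k ∈ Icc m n, (u k - u (k + 1)) = u m - u (n + 1) := by
  rw [← neg_sub, ← Finset.sum_Icc_sub hmn u, ← sum_neg_distrib]
  simp only [neg_sub]

theorem sub_le_max_sub_sub_max_add {f₀ f₁ e₀ e₁ q w : ℝ} (hq₀ : 0 ≤ q) (hq₁ : q ≤ 1)
    (he₀ : 0 ≤ e₀) (he : e₁ ≤ e₀) (hf : q * f₀ ≤ f₁) (hw₀ : 0 ≤ w) (hw₁ : e₁ < f₁ → 1 ≤ w) :
    f₀ - f₁ ≤ max (f₀ - e₀) 0 - max (f₁ - e₁) 0 + ((1 - q) * e₀ + (e₀ - e₁) * w) := by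
  have hmax : ∀ x y : ℝ, max (x - y) 0 = x - min x y := fun x y => by
    rcases le_total x y with h | h <;> simp [h]
  have hfloor : q * min f₀ e₀ ≤ min f₁ e₀ :=
    le_min (by nlinarith [min_le_left f₀ e₀]) (by nlinarith [min_le_right f₀ e₀])
  have hshift : min f₁ e₀ - min f₁ e₁ ≤ (e₀ - e₁) * w := by
    rcases le_or_gt f₁ e₁ with h | h
    · rw [min_eq_left (h.trans he), min_eq_left h]
      nlinarith
    · nlinarith [hw₁ h, min_le_right f₁ e₀, min_eq_right h.le]
  rw [hmax, hmax]
  nlinarith [min_le_right f₀ e₀]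

theorem sum_Icc_sub_succ_le {f e w : ℕ → ℝ} {q : ℝ} {a b : ℕ} (hab : a ≤ b) (hq₀ : 0 ≤ q)
    (hq₁ : q ≤ 1) (he₀ : ∀ k, 0 ≤ e k) (he₁ : e a ≤ 1) (he : Antitone e) (hf₁ : f a ≤ 1)
    (hf : ∀ k, q * f k ≤ f (k + 1)) (hw₀ : ∀ k, 0 ≤ w k) (hw₁ : ∀ k, e k < f k → 1 ≤ w k) :
    ∑ k ∈ Icc a b, (f k - f (k + 1)) ≤
      (1 - e a) * w a + ∑ k ∈ Icc a b, ((1 - q) * e k + (e k - e (k + 1)) * w (k + 1)) := by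
  set excess : ℕ → ℝ := fun k => max (f k - e k) 0
  have hstart : excess a ≤ (1 - e a) * w a := by
    rcases le_or_gt (f a) (e a) with h | h
    · simpa [excess, max_eq_right (sub_nonpos.mpr h)] using mul_nonneg (sub_nonneg.mpr he₁) (hw₀ a)
    · nlinarith [hw₁ a h, le_max_left (f a - e a) 0, max_eq_left (sub_pos.mpr h).le]
  calc ∑ k ∈ Icc a b, (f k - f (k + 1))
      ≤ ∑ k ∈ Icc a b, (excess k - excess (k + 1) +
          ((1 - q) * e k + (e k - e (k + 1)) * w (k + 1))) :=
        sum_le_sum fun k _ => sub_le_max_sub_sub_max_add hq₀ hq₁ (he₀ k)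
          (he (Nat.le_succ k)) (hf k) (hw₀ _) (hw₁ _)
    _ = excess a - excess (b + 1) +
          ∑ k ∈ Icc a b, ((1 - q) * e k + (e k - e (k + 1)) * w (k + 1)) := by
        rw [sum_add_distrib, Finset.sum_Icc_sub_succ hab]
    _ ≤ _ := by linarith [le_max_right (f (b + 1) - e (b + 1)) 0]

theorem sum_integral_le_integral_of_sum_le {Ω ι : Type*} [MeasurableSpace Ω] {μ : Measure Ω}
    (s : Finset ι) {g : ι → Ω → ℝ} {Ψ : Ω → ℝ} (hg : ∀ i ∈ s, ∀ ω, 0 ≤ g i ω)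
    (hΨ : Integrable Ψ μ) (hle : ∀ ω, ∑ i ∈ s, g i ω ≤ Ψ ω) :
    ∑ i ∈ s, ∫ ω, g i ω ∂μ ≤ ∫ ω, Ψ ω ∂μ := by
  classical
  -- a non-integrable `g i` has integral `0`, so only the integrable ones need to be summed
  set t := s.filter fun i => Integrable (g i) μ
  have hsum : ∑ i ∈ s, ∫ ω, g i ω ∂μ = ∫ ω, ∑ i ∈ t, g i ω ∂μ := by
    rw [integral_finsetSum t fun i hi => (mem_filter.mp hi).2]
    exact (sum_subset (filter_subset _ s) fun i hi hit =>
      integral_undef fun h => hit (mem_filter.mpr ⟨hi, h⟩)).symm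
  rw [hsum]
  refine integral_mono_of_nonneg (.of_forall fun ω => ?_) hΨ (.of_forall fun ω => ?_)
  · exact sum_nonneg fun i hi => hg i (filter_subset _ s hi) ω
  · exact (sum_le_sum_of_subset_of_nonneg (filter_subset _ s)
      fun i hi _ => hg i hi ω).trans (hle ω)

theorem sum_integral_sub_succ_le {Ω : Type*} [MeasurableSpace Ω] (μ : Measure Ω)
    [IsProbabilityMeasure μ] {F : ℕ → Ω → ℝ} {e : ℕ → ℝ} {q η : ℝ} {a b : ℕ}
    (hq₀ : 0 ≤ q) (hq₁ : q ≤ 1) (he₀ : ∀ k, 0 ≤ e k) (he₁ : e a ≤ 1) (he : Antitone e)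
    (hF₁ : ∀ ω, F a ω ≤ 1) (hF_anti : ∀ k ω, F (k + 1) ω ≤ F k ω)
    (hF : ∀ k ω, q * F k ω ≤ F (k + 1) ω) (hη : ∀ k ≥ a, μ.real {ω | e k < F k ω} ≤ η) :
    ∑ k ∈ Icc a b, ∫ ω, (F k ω - F (k + 1) ω) ∂μ ≤ η + (1 - q) * ∑ k ∈ Icc a b, e k := by
  have hη₀ : 0 ≤ η := measureReal_nonneg.trans (hη a le_rfl)
  rcases lt_or_ge b a with hba | hab
  · simp [Icc_eq_empty_of_lt hba, hη₀]
  -- measurable hulls of the events `{e k < F k}`, which need not be measurable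
  set C : ℕ → Set Ω := fun k => toMeasurable μ {ω | e k < F k ω}
  set w : ℕ → Ω → ℝ := fun k => (C k).indicator 1
  have hw_int : ∀ k, Integrable (w k) μ := fun k =>
    (integrable_const 1).indicator (measurableSet_toMeasurable _ _)
  have hw_integral : ∀ k, ∫ ω, w k ω ∂μ = μ.real {ω | e k < F k ω} := fun k => by
    rw [integral_indicator_one (measurableSet_toMeasurable _ _), measureReal_def,
      measure_toMeasurable, ← measureReal_def]
  have hw_mem : ∀ k ω, e k < F k ω → 1 ≤ w k ω := fun k ω h => by
    simp [w, C, Set.indicator_of_mem (subset_toMeasurable μ {ω | e k < F k ω} h)]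
  have hw₀ : ∀ k ω, 0 ≤ w k ω := fun k ω => Set.indicator_nonneg (fun _ _ => zero_le_one) ω
  have hterm_int : ∀ k, Integrable (fun ω => (1 - q) * e k + (e k - e (k + 1)) * w (k + 1) ω) μ :=
    fun k => (integrable_const _).add ((hw_int _).const_mul _)
  have hsum_int : Integrable (fun ω =>
      ∑ k ∈ Icc a b, ((1 - q) * e k + (e k - e (k + 1)) * w (k + 1) ω)) μ :=
    integrable_finsetSum _ fun k _ => hterm_int k
  calc ∑ k ∈ Icc a b, ∫ ω, (F k ω - F (k + 1) ω) ∂μ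
      ≤ ∫ ω, ((1 - e a) * w a ω +
          ∑ k ∈ Icc a b, ((1 - q) * e k + (e k - e (k + 1)) * w (k + 1) ω)) ∂μ :=
        sum_integral_le_integral_of_sum_le _ (fun k _ ω => sub_nonneg.mpr (hF_anti k ω))
          (((hw_int a).const_mul _).add hsum_int)
          fun ω => sum_Icc_sub_succ_le hab hq₀ hq₁ he₀ he₁ he (hF₁ ω) (hF · ω)
            (hw₀ · ω) (hw_mem · ω)
    _ = (1 - e a) * μ.real {ω | e a < F a ω} + ∑ k ∈ Icc a b,
          ((1 - q) * e k + (e k - e (k + 1)) * μ.real {ω | e (k + 1) < F (k + 1) ω}) := by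
        rw [integral_add ((hw_int a).const_mul _) hsum_int, integral_const_mul, hw_integral,
          integral_finsetSum _ fun k _ => hterm_int k]
        congr 1
        refine sum_congr rfl fun k _ => ?_
        rw [integral_add (integrable_const _) ((hw_int _).const_mul _), integral_const,
          probReal_univ, one_smul, integral_const_mul, hw_integral]
    _ ≤ (1 - e a) * η + ∑ k ∈ Icc a b, ((1 - q) * e k + (e k - e (k + 1)) * η) := by
        gcongr with k hk
        · exact hη a le_rfl
        · linarith [he (Nat.le_succ k)]
        · exact hη _ ((mem_Icc.mp hk).1.trans (Nat.le_succ k))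
    _ = (1 - e (b + 1)) * η + (1 - q) * ∑ k ∈ Icc a b, e k := by
        rw [sum_add_distrib, ← sum_mul, ← mul_sum, Finset.sum_Icc_sub_succ hab]
        ring
    _ ≤ η + (1 - q) * ∑ k ∈ Icc a b, e k := by nlinarith [he₀ (b + 1)]

theorem sum_integral_killing_le {Ω : Type*} [MeasurableSpace Ω] (μ : Measure Ω)
    [IsProbabilityMeasure μ] {Y : ℕ → Ω → ℝ} {s r M η : ℝ} {a b : ℕ} (hs : 0 ≤ s) (hr : 0 ≤ r)
    (hY₀ : ∀ k ω, 0 ≤ Y k ω) (hYM : ∀ k ω, Y k ω ≤ M)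
    (hη : ∀ k ≥ a, μ.real {ω | ∑ j ∈ range k, Y j ω < k * r} ≤ η) :
    ∑ k ∈ Icc a b, ∫ ω, Real.exp (-(s * ∑ j ∈ range k, Y j ω)) *
        (1 - Real.exp (-(s * Y k ω))) ∂μ
      ≤ η + (1 - Real.exp (-(s * M))) * ∑ k ∈ Icc a b, Real.exp (-(s * k * r)) := by
  obtain ⟨ω₀⟩ := nonempty_of_isProbabilityMeasure μ
  set S : ℕ → Ω → ℝ := fun k ω => ∑ j ∈ range k, Y j ω
  have hS : ∀ k ω, 0 ≤ S k ω := fun k ω => sum_nonneg fun j _ => hY₀ j ω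
  have hS_succ : ∀ k ω, S (k + 1) ω = S k ω + Y k ω := fun k ω => sum_range_succ _ _
  set F : ℕ → Ω → ℝ := fun k ω => Real.exp (-(s * S k ω))
  have hF_sub : ∀ k ω, F k ω * (1 - Real.exp (-(s * Y k ω))) = F k ω - F (k + 1) ω := by
    intro k ω
    simp only [F, hS_succ, mul_add, neg_add, Real.exp_add]
    ring
  show ∑ k ∈ Icc a b, ∫ ω, F k ω * (1 - Real.exp (-(s * Y k ω))) ∂μ ≤ _
  simp only [hF_sub]
  refine sum_integral_sub_succ_le μ (Real.exp_pos _).le ?_ (fun k => (Real.exp_pos _).le)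
    ?_ (fun m n hmn => ?_) (fun ω => ?_) (fun k ω => ?_) (fun k ω => ?_)
    fun k hk => (measureReal_mono fun ω h => ?_).trans (hη k hk)
  · exact Real.exp_le_one_iff.mpr (neg_nonpos.mpr (mul_nonneg hs ((hY₀ 0 ω₀).trans (hYM 0 ω₀))))
  · exact Real.exp_le_one_iff.mpr (neg_nonpos.mpr (by positivity))
  · gcongr
  · exact Real.exp_le_one_iff.mpr (neg_nonpos.mpr (mul_nonneg hs (hS _ _)))
  · simp only [F, hS_succ]
    gcongr
    linarith [hY₀ k ω]
  · simp only [F, hS_succ, ← Real.exp_add]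
    gcongr
    nlinarith [hYM k ω]
  · exact lt_of_mul_lt_mul_left (by simpa [F, mul_assoc] using h) hs

theorem one_div_mul_lt_of_lt_mul_max {S k c : ℝ} (hS : 0 ≤ S) (h : S < k * max c 0) :
    1 / k * S < c := by
  have hk : 0 < k := pos_of_mul_pos_left (hS.trans_lt h) (le_max_right c 0)
  rw [one_div, inv_mul_lt_iff₀ hk]
  rw [mul_max_of_nonneg _ _ hk.le, mul_zero, lt_max_iff] at h
  exact h.resolve_right hS.not_gt

theorem killing_time_lower_tail_estimate_general
    {X : Type} {Ω : Type} [MeasurableSpace Ω] (μ : Measure Ω) [IsProbabilityMeasure μ]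
    (J : X → ℝ) (Jbar : ℝ) (hJ0 : ∀ x, 0 ≤ J x) (hJb : ∀ x, J x ≤ Jbar)
    (Z : ℕ → Ω → X) (ε : ℝ)
    (Jeps η : ℝ)
    (k0 : ℕ) (a : ℝ)
    (hLLN : ∀ k ≥ k0,
      (μ {ω | η ≤ |(1 / (k : ℝ)) * ∑ j ∈ Finset.range k, J (Z j ω) - Jeps|}).toReal ≤ η) :
    (∑ k ∈ Finset.Icc k0 ⌊a / Real.sqrt ε⌋₊,
        ∫ ω, Real.exp (-(Real.sqrt ε * ∑ j ∈ Finset.range k, J (Z j ω))) *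
          (1 - Real.exp (-(Real.sqrt ε * J (Z k ω)))) ∂μ)
      ≤ η + (1 - Real.exp (-(Real.sqrt ε * Jbar))) *
          ∑ k ∈ Finset.Icc k0 ⌊a / Real.sqrt ε⌋₊,
            Real.exp (-(Real.sqrt ε * k * (Jeps - η))) := by
  have hs : 0 ≤ Real.sqrt ε := Real.sqrt_nonneg ε
  obtain ⟨ω₀⟩ := nonempty_of_isProbabilityMeasure μ
  have hJbar : 0 ≤ Jbar := (hJ0 (Z 0 ω₀)).trans (hJb _)
  -- truncating the rate at `0` keeps the comparison profile `e^{-√ε k r}` decreasing and `≤ 1`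
  have hbad : ∀ k ω, ∑ j ∈ range k, J (Z j ω) < k * max (Jeps - η) 0 →
      η ≤ |1 / (k : ℝ) * ∑ j ∈ range k, J (Z j ω) - Jeps| := fun k ω h =>
    le_abs.mpr (Or.inr (by linarith [one_div_mul_lt_of_lt_mul_max (sum_nonneg fun j _ => hJ0 _) h]))
  calc _ ≤ η + (1 - Real.exp (-(Real.sqrt ε * Jbar))) * ∑ k ∈ Icc k0 ⌊a / Real.sqrt ε⌋₊,
          Real.exp (-(Real.sqrt ε * k * max (Jeps - η) 0)) :=
        sum_integral_killing_le μ hs (le_max_right _ _) (fun k ω => hJ0 _) (fun k ω => hJb _)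
          fun k hk => (measureReal_mono fun ω => hbad k ω).trans (hLLN k hk)
    _ ≤ _ := by
        gcongr
        · exact sub_nonneg.mpr (Real.exp_le_one_iff.mpr (neg_nonpos.mpr (mul_nonneg hs hJbar)))
        · exact le_max_left _ _

/-- Key estimate for the killing time `σ` of a chain killed at rate `1 - e^{-√ε J(·)}`
per step: if the empirical averages of `J` concentrate near `J_ε`, then
`∑_{k=k₀}^{[a/√ε]} ν_ε(σ = k) ≤ η + (1 - e^{-√ε J̄}) ∑_{k=k₀}^{[a/√ε]} e^{-√ε k (J_ε - η)}`. -/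
theorem killing_time_lower_tail_estimate
    {X : Type} {Ω : Type} [MeasurableSpace Ω] (μ : Measure Ω) [IsProbabilityMeasure μ]
    (J : X → ℝ) (Jbar : ℝ) (hJ0 : ∀ x, 0 ≤ J x) (hJb : ∀ x, J x ≤ Jbar)
    (Z : ℕ → Ω → X) (ε : ℝ) (hε : 0 < ε)
    (Jeps η : ℝ) (hJeps : 0 < Jeps) (hη : 0 < η)
    (k0 : ℕ) (hk0 : 1 ≤ k0) (a : ℝ) (ha : 0 < a)
    (hLLN : ∀ k ≥ k0,
      (μ {ω | η ≤ |(1 / (k : ℝ)) * ∑ j ∈ Finset.range k, J (Z j ω) - Jeps|}).toReal ≤ η) :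
    (∑ k ∈ Finset.Icc k0 ⌊a / Real.sqrt ε⌋₊,
        ∫ ω, Real.exp (-(Real.sqrt ε * ∑ j ∈ Finset.range k, J (Z j ω))) *
          (1 - Real.exp (-(Real.sqrt ε * J (Z k ω)))) ∂μ)
      ≤ η + (1 - Real.exp (-(Real.sqrt ε * Jbar))) *
          ∑ k ∈ Finset.Icc k0 ⌊a / Real.sqrt ε⌋₊,
            Real.exp (-(Real.sqrt ε * k * (Jeps - η))) :=
  killing_time_lower_tail_estimate_general μ J Jbar hJ0 hJb Z ε Jeps η k0 a hLLN
end
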